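/- The Büchi excerpt strictly subsumes both classical excerpts: (i) for every LTL formula φ there is a Büchi automaton A with supp(A) = Cn_LTL({φ}), so every theory with a finite base is in the Büchi excerpt; (ii) for every finite set {M₁,…,Mₙ} of Kripke structures there is a Büchi automaton A with supp(A) = {φ | Mᵢ ⊨ φ for all i}; and (iii) there exists a Büchi automaton whose support is neither of the form Cn_LTL(X) for any finite set X of LTL formulae nor of the form {φ | M ⊨ φ for all M ∈ S} for any finite set S of Kripke structures. -/

import Mathlib

/-- LTL formulae over a set `AP` of atomic propositions:
`⊥ | p | ¬φ | φ∨φ | Xφ | φ U φ`. -/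
inductive LTLFormula (AP : Type) : Type
  | bot : LTLFormula AP
  | atom : AP → LTLFormula AP
  | neg : LTLFormula AP → LTLFormula AP
  | disj : LTLFormula AP → LTLFormula AP → LTLFormula AP
  | next : LTLFormula AP → LTLFormula AP
  | untl : LTLFormula AP → LTLFormula AP → LTLFormula AP

/-- A trace is an infinite sequence of sets of atomic propositions. -/
abbrev Trace (AP : Type) : Type := ℕ → Set AP

/-- The suffix `π^i` of a trace. -/
def Trace.suffix {AP : Type} (π : Trace AP) (i : ℕ) : Trace AP := fun j => π (i + j)

/-- Satisfaction of an LTL formula by a trace. -/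
def LTLFormula.sat {AP : Type} : LTLFormula AP → Trace AP → Prop
  | .bot, _ => False
  | .atom p, π => p ∈ π 0
  | .neg φ, π => ¬ LTLFormula.sat φ π
  | .disj φ ψ, π => LTLFormula.sat φ π ∨ LTLFormula.sat ψ π
  | .next φ, π => LTLFormula.sat φ (π.suffix 1)
  | .untl φ ψ, π => ∃ i, LTLFormula.sat ψ (π.suffix i) ∧ ∀ j < i, LTLFormula.sat φ (π.suffix j)

/-- A Kripke structure: a finite state set (`Fin n`), a nonempty set of initial
states, a left-total transition relation, and a labeling function. -/
structure Kripke (AP : Type) where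
  n : ℕ
  init : Set (Fin n)
  init_nonempty : init.Nonempty
  trans : Fin n → Fin n → Prop
  trans_total : ∀ s, ∃ s', trans s s'
  label : Fin n → Set AP

/-- The traces of a Kripke structure. -/
def Kripke.traces {AP : Type} (M : Kripke AP) : Set (Trace AP) :=
  {π | ∃ ρ : ℕ → Fin M.n, ρ 0 ∈ M.init ∧ (∀ i, M.trans (ρ i) (ρ (i + 1))) ∧
        ∀ i, π i = M.label (ρ i)}

/-- `M ⊨ φ` : every trace of `M` satisfies `φ`. -/
def Kripke.sat {AP : Type} (M : Kripke AP) (φ : LTLFormula AP) : Prop :=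
  ∀ π ∈ M.traces, φ.sat π

/-- `M ⊨ X` : `M` satisfies every formula in `X`. -/
def Kripke.satSet {AP : Type} (M : Kripke AP) (X : Set (LTLFormula AP)) : Prop :=
  ∀ φ ∈ X, M.sat φ

/-- The consequence operator of LTL: `ψ ∈ CnLTL AP X` iff every Kripke
structure satisfying all of `X` satisfies `ψ`. -/
def CnLTL (AP : Type) (X : Set (LTLFormula AP)) : Set (LTLFormula AP) :=
  {ψ | ∀ M : Kripke AP, M.satSet X → M.sat ψ}

/-- A Büchi automaton over alphabet `A`: a finite state set (`Fin n`), a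
transition relation, initial states and recurrence states. -/
structure Buchi (A : Type) where
  n : ℕ
  trans : Fin n → A → Fin n → Prop
  start : Set (Fin n)
  recur : Set (Fin n)

/-- Acceptance of an infinite word by a Büchi automaton: there is a run from
an initial state visiting recurrence states infinitely often. -/
def Buchi.Accepts {A : Type} (B : Buchi A) (w : ℕ → A) : Prop :=
  ∃ ρ : ℕ → Fin B.n, ρ 0 ∈ B.start ∧ (∀ i, B.trans (ρ i) (w i) (ρ (i + 1))) ∧
    ∀ N, ∃ i, N ≤ i ∧ ρ i ∈ B.recur

/-- The language of a Büchi automaton. -/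
def Buchi.lang {A : Type} (B : Buchi A) : Set (ℕ → A) := {w | B.Accepts w}

/-- The support of a Büchi automaton over `𝒫(AP)`: the LTL formulae satisfied
by every accepted trace. -/
def Buchi.supp {AP : Type} (B : Buchi (Set AP)) : Set (LTLFormula AP) :=
  {φ | ∀ π ∈ B.lang, φ.sat π}

attribute [local instance] Classical.propDecidable

noncomputable section

namespace LTLFormula

variable {AP : Type}

lemma suffix_zero (π : Trace AP) : π.suffix 0 = π := funext fun t => by simp [Trace.suffix]

lemma suffix_suffix (π : Trace AP) (i j : ℕ) :
    (π.suffix i).suffix j = π.suffix (i + j) := funext fun t => by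
  simp [Trace.suffix]; ring_nf

lemma sat_untl_unfold (φ ψ : LTLFormula AP) (π : Trace AP) :
    (untl φ ψ).sat π ↔ ψ.sat π ∨ (φ.sat π ∧ (untl φ ψ).sat (π.suffix 1)) := by
  constructor
  · rintro ⟨i, hψ, hφ⟩
    cases i with
    | zero => left; rwa [suffix_zero] at hψ
    | succ i' =>
      right
      refine ⟨by have := hφ 0 (Nat.succ_pos _); rwa [suffix_zero] at this, ⟨i', ?_, ?_⟩⟩
      · rwa [suffix_suffix, Nat.add_comm]
      · intro j hj
        rw [suffix_suffix]
        have := hφ (j+1) (by omega)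
        rwa [Nat.add_comm] at this
  · rintro (h | ⟨hφ, i, hψ, hφ'⟩)
    · exact ⟨0, by rwa [suffix_zero], fun j hj => absurd hj (by omega)⟩
    · refine ⟨i+1, ?_, ?_⟩
      · rwa [suffix_suffix, Nat.add_comm] at hψ
      · intro j hj
        cases j with
        | zero => rwa [suffix_zero]
        | succ j' =>
          have := hφ' j' (by omega)
          rwa [suffix_suffix, Nat.add_comm] at this

/-- conjunction -/
def andF (φ ψ : LTLFormula AP) : LTLFormula AP := neg (disj (neg φ) (neg ψ))

lemma sat_andF (φ ψ : LTLFormula AP) (π : Trace AP) :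
    (andF φ ψ).sat π ↔ φ.sat π ∧ ψ.sat π := by
  simp [andF, sat]

def top : LTLFormula AP := neg bot

lemma sat_top (π : Trace AP) : (top : LTLFormula AP).sat π := by
  simp [top, sat]

/-- iterated next -/
def nextn : ℕ → LTLFormula AP → LTLFormula AP
  | 0, φ => φ
  | (k+1), φ => next (nextn k φ)

lemma sat_nextn (k : ℕ) (φ : LTLFormula AP) (π : Trace AP) :
    (nextn k φ).sat π ↔ φ.sat (π.suffix k) := by
  induction k generalizing π with
  | zero => rw [suffix_zero]; rfl
  | succ k ih =>
    show (nextn k φ).sat (π.suffix 1) ↔ _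
    rw [ih, suffix_suffix, Nat.add_comm]

def orList : List (LTLFormula AP) → LTLFormula AP
  | [] => bot
  | (φ :: l) => disj φ (orList l)

lemma sat_orList (l : List (LTLFormula AP)) (π : Trace AP) :
    (orList l).sat π ↔ ∃ φ ∈ l, φ.sat π := by
  induction l with
  | nil => simp [orList, sat]
  | cons φ l ih => simp [orList, sat, ih]

def conjList : List (LTLFormula AP) → LTLFormula AP
  | [] => top
  | (φ :: l) => andF φ (conjList l)

lemma sat_conjList (l : List (LTLFormula AP)) (π : Trace AP) :
    (conjList l).sat π ↔ ∀ φ ∈ l, φ.sat π := by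
  induction l with
  | nil => simp [conjList, sat_top]
  | cons φ l ih => simp [conjList, sat_andF, ih]

def size : LTLFormula AP → ℕ
  | bot => 1
  | atom _ => 1
  | neg φ => φ.size + 1
  | disj φ ψ => φ.size + ψ.size + 1
  | next φ => φ.size + 1
  | untl φ ψ => φ.size + ψ.size + 1

lemma size_pos (φ : LTLFormula AP) : 0 < φ.size := by
  cases φ <;> simp [size]

end LTLFormula

end
noncomputable section

namespace LTLFormula

variable {AP : Type}

/-- prepend a letter -/
def consT (a : Set AP) (x : Trace AP) : Trace AP := fun t =>
  match t with
  | 0 => a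
  | (t+1) => x t

lemma consT_suffix_one (a : Set AP) (x : Trace AP) : (consT a x).suffix 1 = x := by
  funext t
  show consT a x (1 + t) = x t
  rw [Nat.add_comm]
  rfl

lemma consT_suffix_succ (a : Set AP) (x : Trace AP) (i : ℕ) :
    (consT a x).suffix (i+1) = x.suffix i := by
  funext t
  show consT a x (i+1+t) = x (i+t)
  have h : i+1+t = (i+t)+1 := by omega
  rw [h]
  rfl

/-- a^m followed by x -/
def towerT (a : Set AP) (m : ℕ) (x : Trace AP) : Trace AP := fun t =>
  if t < m then a else x (t - m)

lemma towerT_succ (a : Set AP) (m : ℕ) (x : Trace AP) :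
    towerT a (m+1) x = consT a (towerT a m x) := by
  funext t
  cases t with
  | zero => simp [towerT, consT]
  | succ t =>
    show (if t+1 < m+1 then a else x (t+1-(m+1))) = (if t < m then a else x (t - m))
    by_cases h : t < m
    · rw [if_pos (by omega), if_pos h]
    · rw [if_neg (by omega), if_neg h]
      have : t+1-(m+1) = t-m := by omega
      rw [this]

/-- The pumping (aperiodicity) lemma for LTL. -/
lemma pump (a : Set AP) : ∀ (φ : LTLFormula AP) (m : ℕ), φ.size ≤ m → ∀ x : Trace AP,
    (φ.sat (towerT a m x) ↔ φ.sat (consT a (towerT a m x))) := by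
  intro φ
  induction φ with
  | bot => intro m hm x; simp [sat]
  | atom p =>
    intro m hm x
    have hm' : 0 < m := by simp [size] at hm; omega
    show p ∈ towerT a m x 0 ↔ p ∈ consT a (towerT a m x) 0
    simp [towerT, consT, hm']
  | neg φ ih =>
    intro m hm x
    have : φ.size ≤ m := by simp [size] at hm; omega
    show ¬ _ ↔ ¬ _
    rw [ih m this x]
  | disj φ ψ ihφ ihψ =>
    intro m hm x
    simp [size] at hm
    show _ ∨ _ ↔ _ ∨ _
    rw [ihφ m (by omega) x, ihψ m (by omega) x]
  | next φ ih =>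
    intro m hm x
    simp [size] at hm
    obtain ⟨m', rfl⟩ : ∃ m', m = m' + 1 := ⟨m - 1, by omega⟩
    show φ.sat ((towerT a (m'+1) x).suffix 1) ↔ φ.sat ((consT a (towerT a (m'+1) x)).suffix 1)
    rw [consT_suffix_one, towerT_succ, consT_suffix_one]
    exact ih m' (by omega) x
  | untl φ ψ ihφ ihψ =>
    intro m hm x
    simp [size] at hm
    have hφm : φ.size ≤ m := by omega
    have hψm : ψ.size ≤ m := by omega
    set π := towerT a m x with hπ
    set π' := consT a π with hπ'
    have hsuf : ∀ i, π'.suffix (i+1) = π.suffix i := fun i => consT_suffix_succ a π i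
    constructor
    · rintro ⟨i, hψs, hφs⟩
      cases i with
      | zero =>
        refine ⟨0, ?_, fun j hj => absurd hj (by omega)⟩
        rw [suffix_zero] at hψs ⊢
        exact (ihψ m hψm x).mp hψs
      | succ i' =>
        refine ⟨i'+1+1, ?_, ?_⟩
        · rw [hsuf]; exact hψs
        · intro j hj
          cases j with
          | zero =>
            rw [suffix_zero]
            have h0 := hφs 0 (by omega)
            rw [suffix_zero] at h0
            exact (ihφ m hφm x).mp h0
          | succ j' =>
            rw [hsuf]
            exact hφs j' (by omega)
    · rintro ⟨i, hψs, hφs⟩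
      cases i with
      | zero =>
        refine ⟨0, ?_, fun j hj => absurd hj (by omega)⟩
        rw [suffix_zero] at hψs ⊢
        exact (ihψ m hψm x).mpr hψs
      | succ i' =>
        refine ⟨i', ?_, ?_⟩
        · rw [← hsuf]; exact hψs
        · intro j hj
          have := hφs (j+1) (by omega)
          rw [hsuf] at this
          exact this

end LTLFormula

/-! ### wrap arithmetic -/

def wrapN (a b t : ℕ) : ℕ := if t < a then t else a + (t - a) % (b - a)

lemma wrapN_lt {a b : ℕ} (h : a < b) (t : ℕ) : wrapN a b t < b := by
  unfold wrapN
  split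
  · omega
  · have : (t - a) % (b - a) < b - a := Nat.mod_lt _ (by omega)
    omega

lemma wrapN_zero (a b : ℕ) : wrapN a b 0 = 0 := by
  unfold wrapN
  split
  · rfl
  · have : a = 0 := by omega
    subst this
    simp

lemma wrapN_eq_of_lt {a b t : ℕ} (h : t < a) : wrapN a b t = t := by simp [wrapN, h]

lemma wrapN_succ_eq {a b : ℕ} (h : a < b) (t : ℕ) :
    wrapN a b (wrapN a b t + 1) = wrapN a b (t + 1) := by
  unfold wrapN
  by_cases h1 : t + 1 ≤ a
  · have ht : t < a := by omega
    simp [ht]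
  · by_cases h2 : t < a
    · -- t = a - 1, t + 1 = a
      have hta : t + 1 = a := by omega
      simp [h2, show ¬ (t+1 < a) by omega, hta]
    · -- t ≥ a
      have hr : (t - a) % (b - a) < b - a := Nat.mod_lt _ (by omega)
      simp only [if_neg h2, if_neg (show ¬ (t + 1 < a) by omega),
        if_neg (show ¬ (a + (t-a) % (b-a) + 1 < a) by omega)]
      congr 1
      have e1 : a + (t - a) % (b - a) + 1 - a = (t - a) % (b - a) + 1 := by omega
      have e2 : t + 1 - a = (t - a) + 1 := by omega
      rw [e1, e2]
      conv_rhs => rw [← Nat.mod_add_mod]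

lemma wrapN_step {a b : ℕ} (h : a < b) (t : ℕ) :
    wrapN a b (t+1) = wrapN a b t + 1 ∨ (wrapN a b t = b - 1 ∧ wrapN a b (t+1) = a) := by
  rw [← wrapN_succ_eq h t]
  set u := wrapN a b t with hu
  have hub : u < b := wrapN_lt h t
  unfold wrapN
  by_cases h1 : u + 1 < a
  · left; rw [if_pos h1]
  · by_cases h2 : u + 1 = b
    · right
      constructor
      · omega
      · simp [if_neg h1, show u + 1 - a = b - a by omega, Nat.mod_self]
    · left
      rw [if_neg h1, Nat.mod_eq_of_lt (show u + 1 - a < b - a by omega)]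
      omega

lemma wrapN_ge {a b t : ℕ} (h : a ≤ t) : a ≤ wrapN a b t := by
  unfold wrapN; split <;> omega

lemma wrapN_periodic {a b : ℕ} (h : a < b) (t : ℕ) (ht : a ≤ t) :
    wrapN a b (t + (b - a)) = wrapN a b t := by
  unfold wrapN
  rw [if_neg (by omega), if_neg (by omega)]
  congr 1
  have : t + (b - a) - a = (t - a) + (b - a) := by omega
  rw [this, Nat.add_mod_right]

end
noncomputable section

open LTLFormula

variable {AP : Type}

/-! ### lasso Kripke structures -/

def lassoK (τ : Trace AP) (k l : ℕ) (hl : 0 < l) : Kripke AP where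
  n := k + l
  init := {s | (s : ℕ) = 0}
  init_nonempty := ⟨⟨0, by omega⟩, rfl⟩
  trans s s' := (s' : ℕ) = wrapN k (k+l) ((s : ℕ) + 1)
  trans_total s := ⟨⟨wrapN k (k+l) ((s:ℕ)+1), wrapN_lt (by omega) _⟩, rfl⟩
  label s := τ (s : ℕ)

lemma periodic_wrap_aux (τ : Trace AP) (k l : ℕ) (hl : 0 < l)
    (hp : ∀ t, k ≤ t → τ (t + l) = τ t) : ∀ d, τ (k + d % l) = τ (k + d) := by
  intro d
  induction d using Nat.strong_induction_on with
  | _ d ih =>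
    by_cases hd : d < l
    · rw [Nat.mod_eq_of_lt hd]
    · have h1 : d % l = (d - l) % l := by
        conv_lhs => rw [show d = (d - l) + l by omega]
        rw [Nat.add_mod_right]
      have h2 : k + d = (k + (d - l)) + l := by omega
      rw [h1, h2, hp (k + (d-l)) (by omega), ih (d - l) (by omega)]

lemma periodic_wrap (τ : Trace AP) (k l : ℕ) (hl : 0 < l)
    (hp : ∀ t, k ≤ t → τ (t + l) = τ t) (t : ℕ) : τ (wrapN k (k+l) t) = τ t := by
  by_cases h : t < k
  · rw [wrapN_eq_of_lt h]
  · have he : wrapN k (k+l) t = k + (t - k) % l := by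
      unfold wrapN
      rw [if_neg h, show k + l - k = l by omega]
    rw [he, periodic_wrap_aux τ k l hl hp (t - k), show k + (t - k) = t by omega]

lemma lassoK_path (τ : Trace AP) (k l : ℕ) (hl : 0 < l) (ρ : ℕ → Fin (k+l))
    (h0 : (ρ 0 : ℕ) = 0) (hT : ∀ i, (lassoK τ k l hl).trans (ρ i) (ρ (i+1))) :
    ∀ t, (ρ t : ℕ) = wrapN k (k+l) t := by
  intro t
  induction t with
  | zero => rw [h0, wrapN_zero]
  | succ t ih =>
    have := hT t
    simp only [lassoK] at this
    rw [this, ih, wrapN_succ_eq (by omega)]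

lemma lassoK_traces (τ : Trace AP) (k l : ℕ) (hl : 0 < l)
    (hp : ∀ t, k ≤ t → τ (t + l) = τ t) : (lassoK τ k l hl).traces = {τ} := by
  ext π
  simp only [Kripke.traces, Set.mem_setOf_eq, Set.mem_singleton_iff]
  constructor
  · rintro ⟨ρ, h0, hT, hL⟩
    have h0' : (ρ 0 : ℕ) = 0 := h0
    have hpath := lassoK_path τ k l hl ρ h0' hT
    funext t
    rw [hL t]
    show τ ((ρ t : ℕ)) = τ t
    rw [hpath t, periodic_wrap τ k l hl hp t]
  · rintro rfl
    refine ⟨fun t => ⟨wrapN k (k+l) t, wrapN_lt (by omega) t⟩, ?_, ?_, ?_⟩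
    · exact wrapN_zero k (k+l)
    · intro i
      show wrapN k (k+l) (i+1) = wrapN k (k+l) (wrapN k (k+l) i + 1)
      rw [wrapN_succ_eq (by omega)]
    · intro t
      exact (periodic_wrap _ k l hl hp t).symm

/-! ### Büchi automata on abstract finite state types -/

structure PreBuchi (A : Type) where
  Q : Type
  [fin : Fintype Q]
  tr : Q → A → Q → Prop
  st : Set Q
  rc : Set Q

attribute [instance] PreBuchi.fin

def PreBuchi.Accepts {A : Type} (P : PreBuchi A) (w : ℕ → A) : Prop :=
  ∃ ρ : ℕ → P.Q, ρ 0 ∈ P.st ∧ (∀ i, P.tr (ρ i) (w i) (ρ (i + 1))) ∧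
    ∀ N, ∃ i, N ≤ i ∧ ρ i ∈ P.rc

lemma PreBuchi.exists_buchi {A : Type} (P : PreBuchi A) :
    ∃ B : Buchi A, ∀ w, B.Accepts w ↔ P.Accepts w := by
  classical
  let e := Fintype.equivFin P.Q
  refine ⟨⟨Fintype.card P.Q, fun s a s' => P.tr (e.symm s) a (e.symm s'),
    {s | e.symm s ∈ P.st}, {s | e.symm s ∈ P.rc}⟩, fun w => ?_⟩
  constructor
  · rintro ⟨ρ, h0, hT, hR⟩
    exact ⟨fun i => e.symm (ρ i), h0, hT, hR⟩
  · rintro ⟨σ, h0, hT, hR⟩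
    refine ⟨fun i => e (σ i), by simpa using h0, fun i => by simpa using hT i, fun N => ?_⟩
    obtain ⟨i, hi, hr⟩ := hR N
    exact ⟨i, hi, by simpa using hr⟩

/-! ### the lasso lemma -/

lemma wrapN_self {a b : ℕ} (h : a < b) : wrapN a b a = a := by
  unfold wrapN
  rw [if_neg (by omega)]
  simp

lemma wrapN_cycles {a b : ℕ} (h : a < b) (c : ℕ) : wrapN a b (a + c * (b - a)) = a := by
  induction c with
  | zero => simpa using wrapN_self h
  | succ c ih =>
    have : a + (c+1) * (b - a) = (a + c * (b - a)) + (b - a) := by ring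
    rw [this, wrapN_periodic h _ (by omega), ih]

lemma Buchi.lasso {B : Buchi (Set AP)} {w : Trace AP} (hw : w ∈ B.lang) :
    ∃ w2 ∈ B.lang, ∃ M : Kripke AP, M.traces = {w2} := by
  obtain ⟨ρ, h0, hT, hR⟩ := hw
  choose f hf1 hf2 using hR
  -- strictly increasing sequence of indices in recur
  let g : ℕ → ℕ := fun c => Nat.rec (f 0) (fun _ gc => f (gc + 1)) c
  have hg1 : ∀ c, ρ (g c) ∈ B.recur := by
    intro c
    cases c with
    | zero => exact hf2 0
    | succ c => exact hf2 _
  have hgmono : StrictMono g := by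
    apply strictMono_nat_of_lt_succ
    intro c
    have := hf1 (g c + 1)
    show g c < f (g c + 1)
    omega
  obtain ⟨x, y, hxy, hexy⟩ := Fintype.exists_ne_map_eq_of_card_lt
    (fun c : Fin (B.n + 1) => ρ (g (c : ℕ))) (by simp)
  -- wlog x < y
  obtain ⟨i, j, hij, hρij, hrec⟩ : ∃ i j, i < j ∧ ρ i = ρ j ∧ ρ i ∈ B.recur := by
    rcases Nat.lt_or_ge (x:ℕ) (y:ℕ) with h | h
    · exact ⟨g x, g y, hgmono h, hexy, hg1 _⟩
    · have h' : (y:ℕ) < (x:ℕ) := lt_of_le_of_ne h (fun hh => hxy (Fin.ext hh.symm))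
      exact ⟨g y, g x, hgmono h', hexy.symm, hg1 _⟩
  refine ⟨fun t => w (wrapN i j t), ?_, lassoK (fun t => w (wrapN i j t)) i (j - i) (by omega), ?_⟩
  · refine ⟨fun t => ρ (wrapN i j t), by show ρ (wrapN i j 0) ∈ B.start; rw [wrapN_zero]; exact h0, ?_, ?_⟩
    · intro t
      show B.trans (ρ (wrapN i j t)) (w (wrapN i j t)) (ρ (wrapN i j (t+1)))
      rcases wrapN_step hij t with h | ⟨hb, ha⟩
      · rw [h]
        exact hT (wrapN i j t)
      · rw [hb, ha, hρij]
        have := hT (j-1)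
        rwa [show j-1+1 = j by omega] at this
    · intro N
      refine ⟨i + N * (j - i), ?_, ?_⟩
      · have h1 : 1 ≤ j - i := by omega
        have h2 : N * 1 ≤ N * (j - i) := Nat.mul_le_mul_left N h1
        omega
      · show ρ (wrapN i j (i + N * (j-i))) ∈ B.recur
        rw [wrapN_cycles hij]
        exact hrec
  · have hkl : i + (j - i) = j := by omega
    apply lassoK_traces
    intro t ht
    show w (wrapN i j (t + (j-i))) = w (wrapN i j t)
    rw [wrapN_periodic hij t ht]

/-! ### König style bound -/

def FppF (p : AP) : LTLFormula AP :=
  LTLFormula.untl LTLFormula.top (andF (.atom p) (.next (.atom p)))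

lemma sat_FppF (p : AP) (π : Trace AP) :
    (FppF p).sat π ↔ ∃ i, p ∈ π i ∧ p ∈ π (i+1) := by
  unfold FppF
  constructor
  · rintro ⟨i, hx, -⟩
    rw [sat_andF] at hx
    obtain ⟨h1, h2⟩ := hx
    refine ⟨i, ?_, ?_⟩
    · simpa [LTLFormula.sat, Trace.suffix] using h1
    · simpa [LTLFormula.sat, Trace.suffix] using h2
  · rintro ⟨i, h1, h2⟩
    refine ⟨i, ?_, fun j _ => sat_top _⟩
    rw [sat_andF]
    constructor
    · show p ∈ π.suffix i 0
      simpa [Trace.suffix] using h1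
    · show p ∈ ((π.suffix i).suffix 1) 0
      simpa [Trace.suffix] using h2

lemma koenig (p : AP) (M : Kripke AP) (hM : M.sat (FppF p)) :
    ∀ π ∈ M.traces, ∃ m, m ≤ M.n ∧ p ∈ π m ∧ p ∈ π (m+1) := by
  rintro π ⟨ρ, h0, hT, hL⟩
  by_contra hcon
  push_neg at hcon
  obtain ⟨x, y, hxy, hexy⟩ := Fintype.exists_ne_map_eq_of_card_lt
    (fun c : Fin (M.n + 1) => ρ (c : ℕ)) (by simp)
  obtain ⟨a, b, hab, hbn, hρab⟩ : ∃ a b, a < b ∧ b ≤ M.n ∧ ρ a = ρ b := by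
    rcases Nat.lt_or_ge (x:ℕ) (y:ℕ) with h | h
    · exact ⟨x, y, h, by omega, hexy⟩
    · have h' : (y:ℕ) < (x:ℕ) := lt_of_le_of_ne h (fun hh => hxy (Fin.ext hh.symm))
      exact ⟨y, x, h', by omega, hexy.symm⟩
  set π' : Trace AP := fun t => M.label (ρ (wrapN a b t)) with hπ'def
  have hπ' : π' ∈ M.traces := by
    refine ⟨fun t => ρ (wrapN a b t), by show ρ (wrapN a b 0) ∈ M.init; rw [wrapN_zero]; exact h0, ?_, fun t => rfl⟩
    intro t
    show M.trans (ρ (wrapN a b t)) (ρ (wrapN a b (t+1)))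
    rcases wrapN_step hab t with h | ⟨hb1, ha1⟩
    · rw [h]
      exact hT (wrapN a b t)
    · rw [hb1, ha1, hρab]
      have := hT (b-1)
      rwa [show b-1+1 = b by omega] at this
  have hs := hM π' hπ'
  rw [sat_FppF] at hs
  obtain ⟨i, h1, h2⟩ := hs
  have hππ : ∀ t, π' t = π (wrapN a b t) := fun t => (hL _).symm
  rcases wrapN_step hab i with h | ⟨hb1, ha1⟩
  · set m := wrapN a b i with hm
    have hmb : m < b := wrapN_lt hab i
    refine hcon m (by omega) ?_ ?_
    · rw [hππ i] at h1; exact h1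
    · rw [hππ (i+1), h] at h2; exact h2
  · refine hcon (b-1) (by omega) ?_ ?_
    · rw [hππ i, hb1] at h1; exact h1
    · rw [hππ (i+1), ha1] at h2
      rw [show b-1+1 = b by omega, hL b, ← hρab, ← hL a]
      exact h2

end
attribute [local instance] Classical.propDecidable

noncomputable section

namespace LTLTrans

open LTLFormula

variable {AP : Type}

def sub : LTLFormula AP → List (LTLFormula AP)
  | .bot => [.bot]
  | .atom p => [.atom p]
  | .neg φ => .neg φ :: sub φ
  | .disj φ ψ => .disj φ ψ :: (sub φ ++ sub ψ)
  | .next φ => .next φ :: sub φ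
  | .untl φ ψ => .untl φ ψ :: (sub φ ++ sub ψ)

lemma self_mem_sub (φ : LTLFormula AP) : φ ∈ sub φ := by
  cases φ <;> simp [sub]

lemma sub_sub : ∀ {φ0 ψ : LTLFormula AP}, ψ ∈ sub φ0 → sub ψ ⊆ sub φ0 := by
  intro φ0
  induction φ0 with
  | bot =>
    intro ψ h
    simp only [sub, List.mem_singleton] at h
    subst h; exact fun x hx => hx
  | atom p =>
    intro ψ h
    simp only [sub, List.mem_singleton] at h
    subst h; exact fun x hx => hx
  | neg φ ih =>
    intro ψ h
    simp only [sub, List.mem_cons] at h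
    rcases h with rfl | h
    · exact fun x hx => hx
    · intro x hx
      have := ih h hx
      simp [sub, this]
  | disj φ χ ihφ ihχ =>
    intro ψ h
    simp only [sub, List.mem_cons, List.mem_append] at h
    rcases h with rfl | h | h
    · exact fun x hx => hx
    · intro x hx; have := ihφ h hx; simp [sub, this]
    · intro x hx; have := ihχ h hx; simp [sub, this]
  | next φ ih =>
    intro ψ h
    simp only [sub, List.mem_cons] at h
    rcases h with rfl | h
    · exact fun x hx => hx
    · intro x hx
      have := ih h hx
      simp [sub, this]
  | untl φ χ ihφ ihχ =>
    intro ψ h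
    simp only [sub, List.mem_cons, List.mem_append] at h
    rcases h with rfl | h | h
    · exact fun x hx => hx
    · intro x hx; have := ihφ h hx; simp [sub, this]
    · intro x hx; have := ihχ h hx; simp [sub, this]

lemma mem_sub_neg {φ0 χ : LTLFormula AP} (h : .neg χ ∈ sub φ0) : χ ∈ sub φ0 :=
  sub_sub h (by simp [sub, self_mem_sub])

lemma mem_sub_next {φ0 χ : LTLFormula AP} (h : .next χ ∈ sub φ0) : χ ∈ sub φ0 :=
  sub_sub h (by simp [sub, self_mem_sub])

lemma mem_sub_disj_left {φ0 χ ξ : LTLFormula AP} (h : .disj χ ξ ∈ sub φ0) : χ ∈ sub φ0 :=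
  sub_sub h (by simp [sub, self_mem_sub])

lemma mem_sub_disj_right {φ0 χ ξ : LTLFormula AP} (h : .disj χ ξ ∈ sub φ0) : ξ ∈ sub φ0 :=
  sub_sub h (by simp [sub, self_mem_sub])

lemma mem_sub_untl_left {φ0 χ ξ : LTLFormula AP} (h : .untl χ ξ ∈ sub φ0) : χ ∈ sub φ0 :=
  sub_sub h (by simp [sub, self_mem_sub])

lemma mem_sub_untl_right {φ0 χ ξ : LTLFormula AP} (h : .untl χ ξ ∈ sub φ0) : ξ ∈ sub φ0 :=
  sub_sub h (by simp [sub, self_mem_sub])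

def SF (φ0 : LTLFormula AP) := {ψ : LTLFormula AP // ψ ∈ sub φ0}

instance (φ0 : LTLFormula AP) : Fintype (SF φ0) :=
  Fintype.subtype (sub φ0).toFinset (by simp)

def V (φ0 : LTLFormula AP) := SF φ0 → Bool

instance (φ0 : LTLFormula AP) : Fintype (V φ0) := inferInstanceAs (Fintype (SF φ0 → Bool))

def lk (φ0 : LTLFormula AP) (v : V φ0) (ψ : LTLFormula AP) : Bool :=
  if h : ψ ∈ sub φ0 then v ⟨ψ, h⟩ else false

def locC (f g : LTLFormula AP → Bool) (a : Set AP) : LTLFormula AP → Prop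
  | .bot => f .bot = false
  | .atom p => (f (.atom p) = true ↔ p ∈ a)
  | .neg χ => (f (.neg χ) = true ↔ ¬ f χ = true)
  | .disj χ ξ => (f (.disj χ ξ) = true ↔ (f χ = true ∨ f ξ = true))
  | .next χ => f (.next χ) = g χ
  | .untl χ ξ => (f (.untl χ ξ) = true ↔ (f ξ = true ∨ (f χ = true ∧ g (.untl χ ξ) = true)))

def del (φ0 : LTLFormula AP) (v : V φ0) (a : Set AP) (w : V φ0) : Prop :=
  ∀ ψ ∈ sub φ0, locC (lk φ0 v) (lk φ0 w) a ψ

def isUb : LTLFormula AP → Bool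
  | .untl _ _ => true
  | _ => false

def ulist (φ0 : LTLFormula AP) : List (LTLFormula AP) := (sub φ0).filter isUb

def K (φ0 : LTLFormula AP) : ℕ := (ulist φ0).length

def condOf : LTLFormula AP → (LTLFormula AP → Bool) → Prop
  | .untl χ ξ, f => (f (.untl χ ξ) = false ∨ f ξ = true)
  | _, _ => True

def cnd (φ0 : LTLFormula AP) (j : Fin (K φ0 + 1)) (f : LTLFormula AP → Bool) : Prop :=
  ∀ h : (j : ℕ) < K φ0, condOf ((ulist φ0).get ⟨j, h⟩) f

/-! ### soundness of the local automaton -/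

lemma sound (φ0 : LTLFormula AP) (π : Trace AP) (v : ℕ → V φ0)
    (hδ : ∀ i, del φ0 (v i) (π i) (v (i+1)))
    (hfair : ∀ θ ∈ sub φ0, ∀ N, ∃ i, N ≤ i ∧ condOf θ (lk φ0 (v i))) :
    ∀ ψ, ψ ∈ sub φ0 → ∀ i, (lk φ0 (v i) ψ = true ↔ ψ.sat (π.suffix i)) := by
  intro ψ
  induction ψ with
  | bot =>
    intro h i
    have hl : lk φ0 (v i) .bot = false := hδ i .bot h
    constructor
    · intro h'; rw [hl] at h'; cases h'
    · intro h'; cases h'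
  | atom p =>
    intro h i
    have hl : lk φ0 (v i) (.atom p) = true ↔ p ∈ π i := hδ i (.atom p) h
    show _ ↔ p ∈ (π.suffix i) 0
    rw [hl]
    simp [Trace.suffix]
  | neg χ ihχ =>
    intro h i
    have hl : lk φ0 (v i) (.neg χ) = true ↔ ¬ lk φ0 (v i) χ = true := hδ i (.neg χ) h
    have hm := mem_sub_neg h
    show _ ↔ ¬ χ.sat (π.suffix i)
    rw [hl, ihχ hm i]
  | disj χ ξ ihχ ihξ =>
    intro h i
    have hl : lk φ0 (v i) (.disj χ ξ) = true ↔ (lk φ0 (v i) χ = true ∨ lk φ0 (v i) ξ = true) :=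
      hδ i (.disj χ ξ) h
    show _ ↔ (χ.sat (π.suffix i) ∨ ξ.sat (π.suffix i))
    rw [hl, ihχ (mem_sub_disj_left h) i, ihξ (mem_sub_disj_right h) i]
  | next χ ihχ =>
    intro h i
    have hl : lk φ0 (v i) (.next χ) = lk φ0 (v (i+1)) χ := hδ i (.next χ) h
    have hm := mem_sub_next h
    show _ ↔ χ.sat ((π.suffix i).suffix 1)
    rw [suffix_suffix, hl, ihχ hm (i+1)]
  | untl χ ξ ihχ ihξ =>
    intro h i
    have hmχ := mem_sub_untl_left h
    have hmξ := mem_sub_untl_right h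
    constructor
    · intro htrue
      obtain ⟨t, hti, hcond⟩ := hfair _ h i
      have key : ∀ d j, lk φ0 (v j) (.untl χ ξ) = true →
          condOf (.untl χ ξ) (lk φ0 (v (j+d))) →
          (LTLFormula.untl χ ξ).sat (π.suffix j) := by
        intro d
        induction d with
        | zero =>
          intro j hj hc
          rcases hc with hc | hc
          · rw [Nat.add_zero] at hc
            rw [hc] at hj; cases hj
          · rw [Nat.add_zero] at hc
            rw [sat_untl_unfold]
            left
            exact (ihξ hmξ j).mp hc
        | succ d ihd =>
          intro j hj hc
          have hl : lk φ0 (v j) (.untl χ ξ) = true ↔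
              (lk φ0 (v j) ξ = true ∨ (lk φ0 (v j) χ = true ∧ lk φ0 (v (j+1)) (.untl χ ξ) = true)) :=
            hδ j (.untl χ ξ) h
          rcases hl.mp hj with hξt | ⟨hχt, hnext⟩
          · rw [sat_untl_unfold]
            left
            exact (ihξ hmξ j).mp hξt
          · rw [sat_untl_unfold]
            right
            refine ⟨(ihχ hmχ j).mp hχt, ?_⟩
            rw [suffix_suffix]
            exact ihd (j+1) hnext (by rwa [show j+1+d = j+(d+1) by omega])
      exact key (t - i) i htrue (by rwa [show i + (t-i) = t by omega])
    · rintro ⟨e, hξs, hχs⟩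
      rw [suffix_suffix] at hξs
      have key2 : ∀ e j, ξ.sat (π.suffix (j+e)) → (∀ d < e, χ.sat (π.suffix (j+d))) →
          lk φ0 (v j) (.untl χ ξ) = true := by
        intro e
        induction e with
        | zero =>
          intro j h1 _
          have hl : lk φ0 (v j) (.untl χ ξ) = true ↔
              (lk φ0 (v j) ξ = true ∨ (lk φ0 (v j) χ = true ∧ lk φ0 (v (j+1)) (.untl χ ξ) = true)) :=
            hδ j (.untl χ ξ) h
          exact hl.mpr (.inl ((ihξ hmξ j).mpr (by rwa [Nat.add_zero] at h1)))
        | succ e ihe =>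
          intro j h1 h2
          have hl : lk φ0 (v j) (.untl χ ξ) = true ↔
              (lk φ0 (v j) ξ = true ∨ (lk φ0 (v j) χ = true ∧ lk φ0 (v (j+1)) (.untl χ ξ) = true)) :=
            hδ j (.untl χ ξ) h
          refine hl.mpr (.inr ⟨(ihχ hmχ j).mpr ?_, ihe (j+1) ?_ ?_⟩)
          · have := h2 0 (by omega)
            rwa [Nat.add_zero] at this
          · rwa [show j+1+e = j+(e+1) by omega]
          · intro d hd
            have := h2 (d+1) (by omega)
            rwa [show j + (d+1) = j+1+d by omega] at this
      apply key2 e i hξs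
      intro d hd
      have := hχs d hd
      rwa [suffix_suffix] at this

/-! ### completeness: the semantic run -/

def semv (φ0 : LTLFormula AP) (π : Trace AP) : V φ0 :=
  fun ψ => if ψ.1.sat π then true else false

lemma lk_semv (φ0 : LTLFormula AP) (π : Trace AP) (ψ : LTLFormula AP) :
    lk φ0 (semv φ0 π) ψ = true ↔ (ψ ∈ sub φ0 ∧ ψ.sat π) := by
  unfold lk semv
  by_cases h : ψ ∈ sub φ0
  · rw [dif_pos h]
    by_cases hs : ψ.sat π <;> simp [h, hs]
  · rw [dif_neg h]
    simp [h]

lemma bool_eq_of_iff {a b : Bool} (h : (a = true) ↔ (b = true)) : a = b := by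
  cases a <;> cases b <;> simp_all

lemma del_semv (φ0 : LTLFormula AP) (π : Trace AP) :
    del φ0 (semv φ0 π) (π 0) (semv φ0 (π.suffix 1)) := by
  intro ψ hψ
  cases ψ with
  | bot =>
    show lk φ0 (semv φ0 π) .bot = false
    rw [Bool.eq_false_iff, Ne, lk_semv]
    rintro ⟨-, hs⟩
    exact hs
  | atom p =>
    show _ ↔ _
    rw [lk_semv]
    exact ⟨fun ⟨_, hs⟩ => hs, fun hp => ⟨hψ, hp⟩⟩
  | neg χ =>
    show _ ↔ ¬ _
    rw [lk_semv, lk_semv]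
    have hm := mem_sub_neg hψ
    constructor
    · rintro ⟨-, hs⟩ ⟨-, hs'⟩
      exact hs hs'
    · intro hn
      exact ⟨hψ, fun hs => hn ⟨hm, hs⟩⟩
  | disj χ ξ =>
    show _ ↔ (_ ∨ _)
    rw [lk_semv, lk_semv, lk_semv]
    have h1 := mem_sub_disj_left hψ
    have h2 := mem_sub_disj_right hψ
    constructor
    · rintro ⟨-, hs | hs⟩
      · exact .inl ⟨h1, hs⟩
      · exact .inr ⟨h2, hs⟩
    · rintro (⟨-, hs⟩ | ⟨-, hs⟩)
      · exact ⟨hψ, .inl hs⟩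
      · exact ⟨hψ, .inr hs⟩
  | next χ =>
    show lk φ0 (semv φ0 π) (.next χ) = lk φ0 (semv φ0 (π.suffix 1)) χ
    have hm := mem_sub_next hψ
    apply bool_eq_of_iff
    rw [lk_semv, lk_semv]
    exact ⟨fun ⟨_, hs⟩ => ⟨hm, hs⟩, fun ⟨_, hs⟩ => ⟨hψ, hs⟩⟩
  | untl χ ξ =>
    show _ ↔ (_ ∨ (_ ∧ _))
    rw [lk_semv, lk_semv, lk_semv, lk_semv, sat_untl_unfold]
    have hmχ := mem_sub_untl_left hψ
    have hmξ := mem_sub_untl_right hψ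
    constructor
    · rintro ⟨-, hs | ⟨hs1, hs2⟩⟩
      · exact .inl ⟨hmξ, hs⟩
      · exact .inr ⟨⟨hmχ, hs1⟩, ⟨hψ, hs2⟩⟩
    · rintro (⟨-, hs⟩ | ⟨⟨-, hs1⟩, ⟨-, hs2⟩⟩)
      · exact ⟨hψ, .inl hs⟩
      · exact ⟨hψ, .inr ⟨hs1, hs2⟩⟩

lemma fair_semv (φ0 : LTLFormula AP) (π : Trace AP) :
    ∀ θ ∈ sub φ0, ∀ N, ∃ i, N ≤ i ∧ condOf θ (lk φ0 (semv φ0 (π.suffix i))) := by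
  intro θ hθ N
  cases θ with
  | untl χ ξ =>
    by_cases hs : (LTLFormula.untl χ ξ).sat (π.suffix N)
    · obtain ⟨e, hξs, -⟩ := hs
      refine ⟨N + e, by omega, .inr ?_⟩
      rw [lk_semv]
      rw [suffix_suffix] at hξs
      exact ⟨mem_sub_untl_right hθ, hξs⟩
    · refine ⟨N, le_rfl, .inl ?_⟩
      rw [Bool.eq_false_iff, Ne, lk_semv]
      rintro ⟨-, hs'⟩
      exact hs hs'
  | bot => exact ⟨N, le_rfl, trivial⟩
  | atom p => exact ⟨N, le_rfl, trivial⟩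
  | neg χ => exact ⟨N, le_rfl, trivial⟩
  | disj χ ξ => exact ⟨N, le_rfl, trivial⟩
  | next χ => exact ⟨N, le_rfl, trivial⟩

end LTLTrans

end
attribute [local instance] Classical.propDecidable

noncomputable section

namespace LTLTrans

open LTLFormula

variable {AP : Type}

lemma fin_succ_val {K : ℕ} (j : Fin (K+1)) (h : (j:ℕ) < K) :
    ((j+1 : Fin (K+1)) : ℕ) = (j:ℕ) + 1 := by
  have hlt : j < Fin.last K := by
    rw [Fin.lt_def]
    simpa using h
  exact Fin.val_add_one_of_lt hlt

lemma fin_wrap_val {K : ℕ} (j : Fin (K+1)) (h : (j:ℕ) = K) :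
    ((j+1 : Fin (K+1)) : ℕ) = 0 := by
  have hj : j = Fin.last K := Fin.ext (by simpa using h)
  rw [hj, Fin.last_add_one]
  rfl

section counter

variable {Kn : ℕ} (m : ℕ → Fin (Kn+1)) (P : Fin (Kn+1) → ℕ → Prop)

/-- the first-change lemma -/
lemma first_change
    (hstep : ∀ i, (P (m i) i ∧ m (i+1) = m i + 1) ∨ (¬ P (m i) i ∧ m (i+1) = m i))
    (u T : ℕ) (huT : u ≤ T) (hne : m u ≠ m T) :
    ∃ w, u ≤ w ∧ w < T ∧ m w = m u ∧ P (m w) w ∧ m (w+1) = m w + 1 := by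
  have hex : ∃ d, m (u + d + 1) ≠ m (u + d) := by
    by_contra hc
    push_neg at hc
    have hcst : ∀ d, m (u + d) = m u := by
      intro d
      induction d with
      | zero => rfl
      | succ d ih => rw [show u + (d+1) = (u+d)+1 from rfl, hc d, ih]
    apply hne
    rw [show T = u + (T - u) by omega, hcst]
  have hd0 := Nat.find_spec hex
  have hmin : ∀ d < Nat.find hex, m (u + d + 1) = m (u + d) := fun d hd =>
    not_ne_iff.mp (Nat.find_min hex hd)
  have hconst : ∀ d ≤ Nat.find hex, m (u + d) = m u := by
    intro d hd
    induction d with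
    | zero => rfl
    | succ d ih =>
      rw [show u + (d+1) = (u+d)+1 from rfl, hmin d (by omega), ih (by omega)]
  set w := u + Nat.find hex with hwdef
  have hw : m w = m u := hconst _ le_rfl
  rcases hstep w with ⟨hP, heq⟩ | ⟨-, heq⟩
  · refine ⟨w, by omega, ?_, hw, hP, heq⟩
    by_contra hge
    push_neg at hge
    apply hne
    rw [show T = u + (T - u) by omega, hconst (T - u) (by omega)]
  · exact absurd heq hd0

lemma cond_inf_often
    (hstep : ∀ i, (P (m i) i ∧ m (i+1) = m i + 1) ∨ (¬ P (m i) i ∧ m (i+1) = m i))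
    (htop : ∀ i (j : Fin (Kn+1)), (j : ℕ) = Kn → P j i)
    (hK : ∀ N, ∃ i, N ≤ i ∧ (m i : ℕ) = Kn) :
    ∀ jv, jv < Kn → ∀ N, ∃ i, N ≤ i ∧ (m i : ℕ) = jv ∧ P (m i) i := by
  intro jv hjv N
  obtain ⟨s, hsN, hsK⟩ := hK N
  have hadv : m (s+1) = m s + 1 := by
    rcases hstep s with ⟨-, h⟩ | ⟨hnP, -⟩
    · exact h
    · exact absurd (htop s (m s) hsK) hnP
  have hs1 : (m (s+1) : ℕ) = 0 := by rw [hadv]; exact fin_wrap_val _ hsK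
  obtain ⟨T, hT1, hTK⟩ := hK (s+1)
  have climb : ∀ D c u, c + D = jv → s+1 ≤ u → u ≤ T → (m u : ℕ) = c →
      ∃ i, s+1 ≤ i ∧ (m i : ℕ) = jv ∧ P (m i) i := by
    intro D
    induction D with
    | zero =>
      intro c u hc hu1 hu2 hval
      have hne : m u ≠ m T := by
        intro hh
        rw [hh, hTK] at hval
        omega
      obtain ⟨w, hw1, _, hw3, hw4, -⟩ := first_change m P hstep u T hu2 hne
      refine ⟨w, by omega, ?_, hw4⟩
      rw [hw3, hval]
      omega
    | succ D ihD =>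
      intro c u hc hu1 hu2 hval
      have hcK : c < Kn := by omega
      have hne : m u ≠ m T := by
        intro hh
        rw [hh, hTK] at hval
        omega
      obtain ⟨w, hw1, hw2, hw3, _, hw5⟩ := first_change m P hstep u T hu2 hne
      have hval' : (m (w+1) : ℕ) = c + 1 := by
        rw [hw5, hw3]
        rw [fin_succ_val _ (by omega : (m u : ℕ) < Kn), hval]
      exact ihD (c+1) (w+1) (by omega) (by omega) (by omega) hval'
  obtain ⟨i, hi1, hi2, hi3⟩ := climb jv 0 (s+1) (by omega) le_rfl hT1 hs1
  exact ⟨i, by omega, hi2, hi3⟩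

lemma counter_hits_top
    (hstep : ∀ i, (P (m i) i ∧ m (i+1) = m i + 1) ∨ (¬ P (m i) i ∧ m (i+1) = m i))
    (hfairP : ∀ (j : Fin (Kn+1)) (N : ℕ), ∃ i, N ≤ i ∧ P j i) :
    ∀ N, ∃ i, N ≤ i ∧ (m i : ℕ) = Kn := by
  have hadv : ∀ u, ∃ w, u ≤ w ∧ m w = m u ∧ m (w+1) = m w + 1 := by
    intro u
    have hex : ∃ d, P (m u) (u + d) := by
      obtain ⟨i, hi1, hi2⟩ := hfairP (m u) u
      exact ⟨i - u, by rwa [show u + (i - u) = i by omega]⟩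
    have hconst : ∀ d ≤ Nat.find hex, m (u + d) = m u := by
      intro d hd
      induction d with
      | zero => rfl
      | succ d ih =>
        have hdlt : d < Nat.find hex := by omega
        have hnP : ¬ P (m u) (u + d) := Nat.find_min hex hdlt
        have hmu : m (u + d) = m u := ih (by omega)
        rcases hstep (u + d) with ⟨hP, -⟩ | ⟨-, heq⟩
        · rw [hmu] at hP
          exact absurd hP hnP
        · rw [show u + (d+1) = (u+d)+1 from rfl, heq, hmu]
    set w := u + Nat.find hex with hwdef
    have hw : m w = m u := hconst _ le_rfl
    have hP : P (m w) w := by rw [hw]; exact Nat.find_spec hex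
    rcases hstep w with ⟨-, heq⟩ | ⟨hnP, -⟩
    · exact ⟨w, by omega, hw, heq⟩
    · exact absurd hP hnP
  have main : ∀ D u, (Kn - (m u : ℕ)) ≤ D → ∃ i, u ≤ i ∧ (m i : ℕ) = Kn := by
    intro D
    induction D with
    | zero =>
      intro u h
      have hlt := (m u).isLt
      exact ⟨u, le_rfl, by omega⟩
    | succ D ih =>
      intro u h
      by_cases hv : (m u : ℕ) = Kn
      · exact ⟨u, le_rfl, hv⟩
      · obtain ⟨w, hw1, hw2, hw3⟩ := hadv u
        have hlt := (m u).isLt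
        have hval : (m (w+1) : ℕ) = (m u : ℕ) + 1 := by
          rw [hw3, hw2, fin_succ_val _ (by omega : (m u : ℕ) < Kn)]
        obtain ⟨i, hi1, hi2⟩ := ih (w+1) (by omega)
        exact ⟨i, by omega, hi2⟩
  intro N
  obtain ⟨i, hi1, hi2⟩ := main (Kn + 1) N (by omega)
  exact ⟨i, hi1, hi2⟩

end counter

end LTLTrans

end
attribute [local instance] Classical.propDecidable

noncomputable section

namespace LTLTrans

open LTLFormula

variable {AP : Type}

lemma mem_ulist_untl {φ0 θ : LTLFormula AP} (h : θ ∈ ulist φ0) :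
    θ ∈ sub φ0 ∧ ∃ χ ξ, θ = .untl χ ξ := by
  unfold ulist at h
  rw [List.mem_filter] at h
  obtain ⟨h1, h2⟩ := h
  refine ⟨h1, ?_⟩
  cases θ with
  | untl χ ξ => exact ⟨χ, ξ, rfl⟩
  | bot => simp [isUb] at h2
  | atom p => simp [isUb] at h2
  | neg χ => simp [isUb] at h2
  | disj χ ξ => simp [isUb] at h2
  | next χ => simp [isUb] at h2

lemma untl_mem_ulist {φ0 χ ξ : LTLFormula AP} (h : .untl χ ξ ∈ sub φ0) :
    LTLFormula.untl χ ξ ∈ ulist φ0 :=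
  List.mem_filter.mpr ⟨h, rfl⟩

def PB (φ0 : LTLFormula AP) : PreBuchi (Set AP) where
  Q := V φ0 × Fin (K φ0 + 1)
  tr s a s' := del φ0 s.1 a s'.1 ∧
    ((cnd φ0 s.2 (lk φ0 s.1) ∧ s'.2 = s.2 + 1) ∨ (¬ cnd φ0 s.2 (lk φ0 s.1) ∧ s'.2 = s.2))
  st := {s | lk φ0 s.1 φ0 = true ∧ s.2 = 0}
  rc := {s | (s.2 : ℕ) = K φ0}

lemma PB_accepts_iff (φ0 : LTLFormula AP) (π : Trace AP) :
    (PB φ0).Accepts π ↔ φ0.sat π := by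
  constructor
  · rintro ⟨ρ, hst, htr, hrec⟩
    have hδ : ∀ i, del φ0 ((ρ i).1) (π i) ((ρ (i+1)).1) := fun i => (htr i).1
    have hstep : ∀ i, (cnd φ0 ((ρ i).2) (lk φ0 ((ρ i).1)) ∧ (ρ (i+1)).2 = (ρ i).2 + 1) ∨
        (¬ cnd φ0 ((ρ i).2) (lk φ0 ((ρ i).1)) ∧ (ρ (i+1)).2 = (ρ i).2) := fun i => (htr i).2
    have hK : ∀ N, ∃ i, N ≤ i ∧ (((ρ i).2 : ℕ)) = K φ0 := fun N => hrec N
    have hfair : ∀ θ ∈ sub φ0, ∀ N, ∃ i, N ≤ i ∧ condOf θ (lk φ0 ((ρ i).1)) := by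
      intro θ hθ N
      cases θ with
      | untl χ ξ =>
        have hul := untl_mem_ulist hθ
        obtain ⟨idx, hidx⟩ := List.mem_iff_get.mp hul
        have hidxlt : (idx : ℕ) < K φ0 := idx.isLt
        obtain ⟨i, hi1, hi2, hi3⟩ := cond_inf_often (fun i => (ρ i).2)
          (fun j i => cnd φ0 j (lk φ0 ((ρ i).1))) hstep
          (fun i j hj => fun hlt => absurd hlt (by omega))
          hK (idx : ℕ) hidxlt N
        refine ⟨i, hi1, ?_⟩
        have hi4 := hi3 (by omega : (((ρ i).2 : ℕ)) < K φ0)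
        have hgt : (ulist φ0).get ⟨((ρ i).2 : ℕ), by omega⟩ = (ulist φ0).get idx := by
          congr 1
          exact Fin.ext (by simpa using hi2)
        rw [hgt, hidx] at hi4
        exact hi4
      | bot => exact ⟨N, le_rfl, trivial⟩
      | atom p => exact ⟨N, le_rfl, trivial⟩
      | neg χ => exact ⟨N, le_rfl, trivial⟩
      | disj χ ξ => exact ⟨N, le_rfl, trivial⟩
      | next χ => exact ⟨N, le_rfl, trivial⟩
    have hsound := sound φ0 π (fun i => (ρ i).1) hδ hfair φ0 (self_mem_sub φ0) 0
    rw [suffix_zero] at hsound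
    exact hsound.mp hst.1
  · intro hsat
    let v : ℕ → V φ0 := fun i => semv φ0 (π.suffix i)
    let mm : ℕ → Fin (K φ0 + 1) := fun n =>
      Nat.rec 0 (fun i mi => if cnd φ0 mi (lk φ0 (v i)) then mi + 1 else mi) n
    have hstep : ∀ i, (cnd φ0 (mm i) (lk φ0 (v i)) ∧ mm (i+1) = mm i + 1) ∨
        (¬ cnd φ0 (mm i) (lk φ0 (v i)) ∧ mm (i+1) = mm i) := by
      intro i
      by_cases h : cnd φ0 (mm i) (lk φ0 (v i))
      · left
        refine ⟨h, ?_⟩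
        show (if cnd φ0 (mm i) (lk φ0 (v i)) then mm i + 1 else mm i) = mm i + 1
        rw [if_pos h]
      · right
        refine ⟨h, ?_⟩
        show (if cnd φ0 (mm i) (lk φ0 (v i)) then mm i + 1 else mm i) = mm i
        rw [if_neg h]
    refine ⟨fun i => (v i, mm i), ⟨?_, rfl⟩, ?_, ?_⟩
    · show lk φ0 (semv φ0 (π.suffix 0)) φ0 = true
      rw [lk_semv]
      exact ⟨self_mem_sub φ0, by rwa [suffix_zero]⟩
    · intro i
      refine ⟨?_, hstep i⟩
      have hds := del_semv φ0 (π.suffix i)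
      rw [suffix_suffix] at hds
      have harg : (π.suffix i) 0 = π i := by simp [Trace.suffix]
      rw [harg] at hds
      exact hds
    · have hfairP : ∀ (j : Fin (K φ0 + 1)) (N : ℕ), ∃ i, N ≤ i ∧ cnd φ0 j (lk φ0 (v i)) := by
        intro j N
        by_cases hj : (j:ℕ) < K φ0
        · have hmem : (ulist φ0).get ⟨j, hj⟩ ∈ ulist φ0 := List.get_mem _ _
          obtain ⟨hsubm, χ, ξ, hform⟩ := mem_ulist_untl hmem
          obtain ⟨i, hi1, hi2⟩ := fair_semv φ0 π _ hsubm N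
          exact ⟨i, hi1, fun _ => hi2⟩
        · exact ⟨N, le_rfl, fun h => absurd h hj⟩
      exact counter_hits_top mm (fun j i => cnd φ0 j (lk φ0 (v i))) hstep hfairP

theorem exists_buchi_models (φ0 : LTLFormula AP) :
    ∃ B : Buchi (Set AP), B.lang = {π : Trace AP | φ0.sat π} := by
  obtain ⟨B, hB⟩ := (PB φ0).exists_buchi
  exact ⟨B, Set.ext fun π => (hB π).trans (PB_accepts_iff φ0 π)⟩

end LTLTrans

end
attribute [local instance] Classical.propDecidable

noncomputable section

namespace KU

variable {AP : Type}

lemma ktrans_transfer {M M' : Kripke AP} (hMM : M = M') {a b : ℕ}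
    (ha : a < M.n) (hb : b < M.n) (ha' : a < M'.n) (hb' : b < M'.n)
    (h : M.trans ⟨a, ha⟩ ⟨b, hb⟩) : M'.trans ⟨a, ha'⟩ ⟨b, hb'⟩ := by
  subst hMM; exact h

lemma klabel_transfer {M M' : Kripke AP} (hMM : M = M') {a : ℕ}
    (ha : a < M.n) (ha' : a < M'.n) (x : Set AP)
    (h : x = M.label ⟨a, ha⟩) : x = M'.label ⟨a, ha'⟩ := by
  subst hMM; exact h

def NB (n : ℕ) (M : Fin n → Kripke AP) : ℕ := (Finset.univ.sup fun i => (M i).n) + 1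

def PBk (n : ℕ) (M : Fin n → Kripke AP) : PreBuchi (Set AP) where
  Q := Fin n × Fin (NB n M)
  tr s a s' := s'.1 = s.1 ∧ ∃ (h : (s.2 : ℕ) < (M s.1).n) (h' : ((s'.2 : ℕ)) < (M s.1).n),
      (M s.1).trans ⟨s.2, h⟩ ⟨s'.2, h'⟩ ∧ a = (M s.1).label ⟨s.2, h⟩
  st := {s | ∃ h : (s.2 : ℕ) < (M s.1).n, (⟨(s.2 : ℕ), h⟩ : Fin (M s.1).n) ∈ (M s.1).init}
  rc := Set.univ

lemma PBk_accepts (n : ℕ) (M : Fin n → Kripke AP) (w : Trace AP) :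
    (PBk n M).Accepts w ↔ ∃ i, w ∈ (M i).traces := by
  constructor
  · rintro ⟨σ, h0, hT, -⟩
    have hcomp : ∀ t, (σ t).1 = (σ 0).1 := by
      intro t
      induction t with
      | zero => rfl
      | succ t ih => rw [(hT t).1, ih]
    set j := (σ 0).1 with hj
    have hvalid : ∀ t, ((σ t).2 : ℕ) < (M j).n := by
      intro t
      obtain ⟨-, h, -, -, -⟩ := hT t
      rwa [hcomp t] at h
    refine ⟨j, fun t => ⟨(σ t).2, hvalid t⟩, ?_, ?_, ?_⟩
    · obtain ⟨h, hmem⟩ := h0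
      exact hmem
    · intro t
      obtain ⟨-, h, h', htr, -⟩ := hT t
      exact ktrans_transfer (congrArg M (hcomp t)) h h' (hvalid t) (hvalid (t+1)) htr
    · intro t
      obtain ⟨-, h, h', -, hlab⟩ := hT t
      exact klabel_transfer (congrArg M (hcomp t)) h (hvalid t) (w t) hlab
  · rintro ⟨i, ρ, h0, hT, hL⟩
    have hb : (M i).n ≤ Finset.univ.sup fun i => (M i).n := Finset.le_sup (f := fun i => (M i).n) (Finset.mem_univ i)
    refine ⟨fun t => (i, ⟨(ρ t : ℕ), by have := (ρ t).isLt; unfold NB; omega⟩), ?_, ?_, ?_⟩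
    · exact ⟨(ρ 0).isLt, h0⟩
    · intro t
      exact ⟨rfl, (ρ t).isLt, (ρ (t+1)).isLt, hT t, hL t⟩
    · intro N
      exact ⟨N, le_rfl, trivial⟩

theorem exists_buchi_union (n : ℕ) (M : Fin n → Kripke AP) :
    ∃ B : Buchi (Set AP), B.supp = {φ : LTLFormula AP | ∀ i : Fin n, (M i).sat φ} := by
  obtain ⟨B, hB⟩ := (PBk n M).exists_buchi
  refine ⟨B, Set.ext fun φ => ?_⟩
  constructor
  · intro hφ i π hπ
    exact hφ π ((hB π).mpr ((PBk_accepts n M π).mpr ⟨i, hπ⟩))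
  · intro hφ π hπ
    obtain ⟨i, hi⟩ := (PBk_accepts n M π).mp ((hB π).mp hπ)
    exact hφ i π hi

end KU

end
attribute [local instance] Classical.propDecidable

noncomputable section

namespace Ex3

open LTLFormula LTLTrans

variable {AP : Type}

def LL (p : AP) : Set (Trace AP) :=
  {π | (∀ k, p ∈ π (2*k)) ∧ ∃ k, p ∈ π (2*k+1)}

def PB3 (p : AP) : PreBuchi (Set AP) where
  Q := Bool × Bool
  tr s a s' := (s.1 = false → p ∈ a) ∧ s'.1 = !s.1 ∧ s'.2 = (s.2 || (s.1 && decide (p ∈ a)))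
  st := {(false, false)}
  rc := {s | s.2 = true}

lemma PB3_accepts (p : AP) (w : Trace AP) : (PB3 p).Accepts w ↔ w ∈ LL p := by
  constructor
  · rintro ⟨ρ, h0, hT, hR⟩
    have h0' : ρ 0 = (false, false) := h0
    have hpar : ∀ t, ((ρ t).1 = false ↔ Even t) := by
      intro t
      induction t with
      | zero => simp [h0']
      | succ t ih =>
        rw [(hT t).2.1, Nat.even_add_one]
        constructor
        · intro h hev
          have h1 : (ρ t).1 = false := ih.mpr hev
          rw [h1] at h
          simp at h
        · intro hne
          have h1 : (ρ t).1 = true := by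
            cases hbb : (ρ t).1
            · exact absurd (ih.mp hbb) hne
            · rfl
          rw [h1]
          rfl
    have hseen : ∀ t, (ρ t).2 = true → ∃ k, p ∈ w (2*k+1) := by
      intro t
      induction t with
      | zero =>
        intro h
        rw [h0'] at h
        simp at h
      | succ t ih =>
        intro h
        rw [(hT t).2.2, Bool.or_eq_true, Bool.and_eq_true] at h
        rcases h with h | ⟨hb1, hb2⟩
        · exact ih h
        · have hodd : ¬ Even t := fun he => by
            have := (hpar t).mpr he
            rw [this] at hb1
            cases hb1
          obtain ⟨k, hk⟩ : Odd t := Nat.not_even_iff_odd.mp hodd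
          exact ⟨k, by rw [← hk]; exact of_decide_eq_true hb2⟩
    constructor
    · intro k
      exact (hT (2*k)).1 ((hpar (2*k)).mpr ⟨k, by omega⟩)
    · obtain ⟨i, -, hrec⟩ := hR 0
      exact hseen i hrec
  · rintro ⟨hE, k0, hk0⟩
    refine ⟨fun t => (decide (Odd t), decide (∃ j, j < t ∧ Odd j ∧ p ∈ w j)), ?_, ?_, ?_⟩
    · show (_, _) = ((false : Bool), (false : Bool))
      have h1 : ¬ Odd 0 := by simp [Nat.odd_iff]
      have h2 : ¬ ∃ j, j < 0 ∧ Odd j ∧ p ∈ w j := by rintro ⟨j, hj, -⟩; omega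
      rw [decide_eq_false h1, decide_eq_false h2]
    · intro t
      refine ⟨?_, ?_, ?_⟩
      · intro hf
        have hno : ¬ Odd t := of_decide_eq_false hf
        obtain ⟨k, hk⟩ : Even t := Nat.not_odd_iff_even.mp hno
        have := hE k
        rwa [show 2*k = t by omega] at this
      · show decide (Odd (t+1)) = !decide (Odd t)
        by_cases h : Odd t
        · rw [decide_eq_true h, decide_eq_false (by
            intro hodd
            obtain ⟨a, ha⟩ := h
            obtain ⟨b, hb⟩ := hodd
            omega)]
          rfl
        · rw [decide_eq_false h, decide_eq_true (by
            obtain ⟨a, ha⟩ : Even t := Nat.not_odd_iff_even.mp h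
            exact ⟨a, by omega⟩)]
          rfl
      · show decide (∃ j, j < t+1 ∧ Odd j ∧ p ∈ w j) =
          (decide (∃ j, j < t ∧ Odd j ∧ p ∈ w j) || (decide (Odd t) && decide (p ∈ w t)))
        apply bool_eq_of_iff
        rw [Bool.or_eq_true, Bool.and_eq_true, decide_eq_true_eq, decide_eq_true_eq,
          decide_eq_true_eq, decide_eq_true_eq]
        constructor
        · rintro ⟨j, hj, hodd, hp⟩
          rcases Nat.lt_or_ge j t with hlt | hge
          · exact .inl ⟨j, hlt, hodd, hp⟩
          · have : j = t := by omega
            subst this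
            exact .inr ⟨hodd, hp⟩
        · rintro (⟨j, hj, hodd, hp⟩ | ⟨hodd, hp⟩)
          · exact ⟨j, by omega, hodd, hp⟩
          · exact ⟨t, by omega, hodd, hp⟩
    · intro N
      refine ⟨max N (2*k0+2), le_max_left _ _, ?_⟩
      show decide (∃ j, j < max N (2*k0+2) ∧ Odd j ∧ p ∈ w j) = true
      exact decide_eq_true ⟨2*k0+1, lt_of_lt_of_le (by omega) (le_max_right _ _), ⟨k0, rfl⟩, hk0⟩

/-! ### auxiliary formula facts -/

lemma sat_pXp (p : AP) (π : Trace AP) (j : ℕ) :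
    (andF (.atom p) (.next (.atom p))).sat (π.suffix j) ↔ (p ∈ π j ∧ p ∈ π (j+1)) := by
  rw [sat_andF]
  have h1 : (LTLFormula.atom p).sat (π.suffix j) ↔ p ∈ π j := by
    show p ∈ (π.suffix j) 0 ↔ _
    simp [Trace.suffix]
  have h2 : (LTLFormula.next (.atom p)).sat (π.suffix j) ↔ p ∈ π (j+1) := by
    show p ∈ ((π.suffix j).suffix 1) 0 ↔ _
    simp [Trace.suffix]
  rw [h1, h2]

def phiN (p : AP) (N : ℕ) : LTLFormula AP :=
  orList ((List.range (N+1)).map fun j => nextn j (andF (.atom p) (.next (.atom p))))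

lemma sat_phiN (p : AP) (N : ℕ) (π : Trace AP) :
    (phiN p N).sat π ↔ ∃ j, j ≤ N ∧ p ∈ π j ∧ p ∈ π (j+1) := by
  rw [phiN, sat_orList]
  constructor
  · rintro ⟨φ, hφ, hs⟩
    rw [List.mem_map] at hφ
    obtain ⟨j, hj, rfl⟩ := hφ
    rw [List.mem_range] at hj
    rw [sat_nextn, sat_pXp] at hs
    exact ⟨j, by omega, hs⟩
  · rintro ⟨j, hj, h1, h2⟩
    refine ⟨nextn j (andF (.atom p) (.next (.atom p))),
      List.mem_map.mpr ⟨j, List.mem_range.mpr (by omega), rfl⟩, ?_⟩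
    rw [sat_nextn, sat_pXp]
    exact ⟨h1, h2⟩

lemma sat_nextn_atom (p : AP) (t : ℕ) (π : Trace AP) :
    (nextn t (.atom p)).sat π ↔ p ∈ π t := by
  rw [sat_nextn]
  show p ∈ (π.suffix t) 0 ↔ _
  simp [Trace.suffix]

/-! ### clause 2 : not the theory of finitely many models -/

theorem no_kripke (p : AP) (B : Buchi (Set AP))
    (hsupp : ∀ φ : LTLFormula AP, φ ∈ B.supp ↔ ∀ π ∈ LL p, φ.sat π) :
    ¬ ∃ (n : ℕ) (M : Fin n → Kripke AP),
      B.supp = {φ : LTLFormula AP | ∀ i : Fin n, (M i).sat φ} := by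
  rintro ⟨n, Ms, hth⟩
  have hθ : ∀ i, (Ms i).sat (FppF p) := by
    have hm : FppF p ∈ B.supp := (hsupp _).mpr (by
      rintro π ⟨hE, k0, hk0⟩
      rw [sat_FppF]
      refine ⟨2*k0+1, hk0, ?_⟩
      have := hE (k0+1)
      rwa [show 2*(k0+1) = 2*k0+1+1 by omega] at this)
    rw [hth] at hm
    exact hm
  set Nx := Finset.univ.sup (fun i => (Ms i).n) with hNx
  have hφN : phiN p Nx ∈ B.supp := by
    rw [hth]
    intro i π hπ
    obtain ⟨m, hm, h1, h2⟩ := koenig p (Ms i) (hθ i) π hπ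
    rw [sat_phiN]
    exact ⟨m, le_trans hm (Finset.le_sup (f := fun i => (Ms i).n) (Finset.mem_univ i)), h1, h2⟩
  set τ : Trace AP := fun t => if (Even t ∨ t = 2*(Nx+1)+1) then {p} else ∅ with hτ
  have hτL : τ ∈ LL p := by
    constructor
    · intro k
      show p ∈ (if (Even (2*k) ∨ 2*k = 2*(Nx+1)+1) then ({p} : Set AP) else ∅)
      rw [if_pos (Or.inl ⟨k, by omega⟩)]
      rfl
    · refine ⟨Nx+1, ?_⟩
      show p ∈ (if (Even (2*(Nx+1)+1) ∨ 2*(Nx+1)+1 = 2*(Nx+1)+1) then ({p} : Set AP) else ∅)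
      rw [if_pos (Or.inr rfl)]
      rfl
  have hsat := (hsupp _).mp hφN τ hτL
  rw [sat_phiN] at hsat
  obtain ⟨j, hj, h1, h2⟩ := hsat
  rcases Nat.even_or_odd j with he | ho
  · have hemp : τ (j+1) = ∅ := by
      show (if (Even (j+1) ∨ j+1 = 2*(Nx+1)+1) then ({p} : Set AP) else ∅) = ∅
      rw [if_neg]
      rintro (h | h)
      · exact (Nat.even_add_one.mp h) he
      · omega
    rw [hemp] at h2
    exact Set.notMem_empty p h2
  · have hemp : τ j = ∅ := by
      show (if (Even j ∨ j = 2*(Nx+1)+1) then ({p} : Set AP) else ∅) = ∅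
      rw [if_neg]
      rintro (h | h)
      · exact (Nat.not_odd_iff_even.mpr h) ho
      · omega
    rw [hemp] at h1
    exact Set.notMem_empty p h1

/-! ### clause 1 : not the consequences of a finite base -/

theorem no_finite_base (p : AP) (B : Buchi (Set AP))
    (hsupp : ∀ φ : LTLFormula AP, φ ∈ B.supp ↔ ∀ π ∈ LL p, φ.sat π) :
    ¬ ∃ X : Set (LTLFormula AP), X.Finite ∧ B.supp = CnLTL AP X := by
  rintro ⟨X, hXf, hXeq⟩
  set lX := hXf.toFinset.toList with hlX
  have hmemlX : ∀ ψ : LTLFormula AP, ψ ∈ lX ↔ ψ ∈ X := by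
    intro ψ
    rw [hlX, Finset.mem_toList, Set.Finite.mem_toFinset]
  set φX := conjList lX with hφXdef
  have hCn : φX ∈ CnLTL AP X := by
    intro M hM π hπ
    rw [hφXdef, sat_conjList]
    intro ψ hψ
    exact hM ψ ((hmemlX ψ).mp hψ) π hπ
  have hφXsupp : ∀ π ∈ LL p, φX.sat π := (hsupp _).mp (hXeq ▸ hCn)
  set m := 2 * φX.size + 3 with hm
  set x : Trace AP := fun t => if Odd t then {p} else (∅ : Set AP) with hx
  have hπmL : towerT {p} m x ∈ LL p := by
    constructor
    · intro k
      show p ∈ (if 2*k < m then ({p} : Set AP) else x (2*k - m))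
      by_cases hk : 2*k < m
      · rw [if_pos hk]; rfl
      · rw [if_neg hk]
        show p ∈ (if Odd (2*k - m) then ({p} : Set AP) else ∅)
        rw [if_pos ⟨k - φX.size - 2, by omega⟩]
        rfl
    · refine ⟨0, ?_⟩
      show p ∈ (if 2*0+1 < m then ({p} : Set AP) else x (2*0+1 - m))
      rw [if_pos (by omega)]
      rfl
  have hsat1 : φX.sat (towerT {p} m x) := hφXsupp _ hπmL
  have hsat2 : φX.sat (towerT {p} (m+1) x) := by
    rw [towerT_succ]
    exact (pump {p} φX m (by omega) x).mp hsat1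
  set π' := towerT {p} (m+1) x with hπ'def
  have hper : ∀ t, m+1 ≤ t → π' (t + 2) = π' t := by
    intro t ht
    show (if t+2 < m+1 then ({p} : Set AP) else x (t+2 - (m+1))) =
      (if t < m+1 then ({p} : Set AP) else x (t - (m+1)))
    rw [if_neg (by omega), if_neg (by omega)]
    have harg : t + 2 - (m+1) = (t - (m+1)) + 2 := by omega
    rw [harg]
    show (if Odd ((t - (m+1)) + 2) then ({p} : Set AP) else ∅) =
      (if Odd (t - (m+1)) then ({p} : Set AP) else ∅)
    by_cases ho : Odd (t - (m+1))
    · obtain ⟨c, hc⟩ := ho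
      rw [if_pos ⟨c+1, by omega⟩, if_pos ⟨c, hc⟩]
    · rw [if_neg (by rintro ⟨c, hc⟩; exact ho ⟨c-1, by omega⟩), if_neg ho]
  have htr : (lassoK π' (m+1) 2 (by omega)).traces = {π'} :=
    lassoK_traces π' (m+1) 2 (by omega) hper
  have hMX : (lassoK π' (m+1) 2 (by omega)).satSet X := by
    intro ψ hψ π hπ
    rw [htr] at hπ
    have hππ : π = π' := hπ
    rw [hππ]
    have h2 := hsat2
    rw [hφXdef, sat_conjList] at h2
    exact h2 ψ ((hmemlX ψ).mpr hψ)
  have hψk : nextn (m+1) (.atom p) ∈ B.supp := (hsupp _).mpr (by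
    intro π hπ
    rw [sat_nextn_atom]
    have := hπ.1 ((m+1)/2)
    rwa [show 2*((m+1)/2) = m+1 by omega] at this)
  have hψCn : nextn (m+1) (.atom p) ∈ CnLTL AP X := hXeq ▸ hψk
  have hfin := hψCn _ hMX π' (by rw [htr]; rfl)
  rw [sat_nextn_atom] at hfin
  have hemp : π' (m+1) = ∅ := by
    show (if m+1 < m+1 then ({p} : Set AP) else x (m+1 - (m+1))) = ∅
    rw [if_neg (by omega), Nat.sub_self]
    show (if Odd 0 then ({p} : Set AP) else ∅) = ∅
    rw [if_neg (by simp [Nat.odd_iff])]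
  rw [hemp] at hfin
  exact Set.notMem_empty p hfin

end Ex3

end

/-- the Büchi excerpt strictly subsumes the excerpts of finite
bases and of finite sets of models: (i) every theory `Cn_LTL({φ})` is the
support of some Büchi automaton; (ii) the theory of any finite family of
Kripke structures is the support of some Büchi automaton; (iii) some Büchi
automaton has a support which is neither the consequence set of a finite set
of formulae nor the theory of a finite family of Kripke structures. -/
theorem buchi_excerpt_strictly_subsumes (AP : Type) [Fintype AP] [Nonempty AP] :
    (∀ φ : LTLFormula AP, ∃ B : Buchi (Set AP), B.supp = CnLTL AP {φ}) ∧
    (∀ (n : ℕ) (M : Fin n → Kripke AP), ∃ B : Buchi (Set AP),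
        B.supp = {φ : LTLFormula AP | ∀ i : Fin n, (M i).sat φ}) ∧
    (∃ B : Buchi (Set AP),
        (¬ ∃ X : Set (LTLFormula AP), X.Finite ∧ B.supp = CnLTL AP X) ∧
        (¬ ∃ (n : ℕ) (M : Fin n → Kripke AP),
            B.supp = {φ : LTLFormula AP | ∀ i : Fin n, (M i).sat φ})) := by
  obtain ⟨p⟩ := ‹Nonempty AP›
  refine ⟨?_, ?_, ?_⟩
  · -- (i) finite bases
    intro φ
    obtain ⟨B, hB⟩ := LTLTrans.exists_buchi_models φ
    refine ⟨B, Set.ext fun ψ => ?_⟩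
    constructor
    · intro hψ M hM π hπ
      have hφπ : φ.sat π := hM φ rfl π hπ
      exact hψ π (by rw [hB]; exact hφπ)
    · intro hψ π hπ
      rw [hB] at hπ
      by_contra hns
      obtain ⟨Bχ, hBχ⟩ := LTLTrans.exists_buchi_models (LTLFormula.andF φ (.neg ψ))
      have hmem : π ∈ Bχ.lang := by
        rw [hBχ]
        show (LTLFormula.andF φ (.neg ψ)).sat π
        rw [LTLFormula.sat_andF]
        exact ⟨hπ, hns⟩
      obtain ⟨w2, hw2lang, Mw, hMw⟩ := Buchi.lasso hmem
      rw [hBχ] at hw2lang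
      have hw2 : φ.sat w2 ∧ ¬ ψ.sat w2 := by
        have h := hw2lang
        rw [show (w2 ∈ {π : Trace AP | (LTLFormula.andF φ (.neg ψ)).sat π}) =
          ((LTLFormula.andF φ (.neg ψ)).sat w2) from rfl, LTLFormula.sat_andF] at h
        exact h
      have hsatset : Mw.satSet {φ} := by
        intro φ' hφ' π' hπ'
        rw [hMw] at hπ'
        have hh : π' = w2 := hπ'
        have hh2 : φ' = φ := hφ'
        rw [hh, hh2]
        exact hw2.1
      have := hψ Mw hsatset w2 (by rw [hMw]; rfl)
      exact hw2.2 this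
  · -- (ii) finite unions of models
    exact fun n M => KU.exists_buchi_union n M
  · -- (iii) the strictness witness
    obtain ⟨B, hB⟩ := (Ex3.PB3 p).exists_buchi
    have hsupp : ∀ φ : LTLFormula AP, φ ∈ B.supp ↔ ∀ π ∈ Ex3.LL p, φ.sat π := by
      intro φ
      constructor
      · intro h π hπ
        exact h π ((hB π).mpr ((Ex3.PB3_accepts p π).mpr hπ))
      · intro h π hπ
        exact h π ((Ex3.PB3_accepts p π).mp ((hB π).mp hπ))
    exact ⟨B, Ex3.no_finite_base p B hsupp, Ex3.no_kripke p B hsupp⟩
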